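/- arXiv:1812.05402 — 2 statements merged into one kernel-verified Lean document; each statement's English description precedes it below -/
import Mathlib

section
/- A real d×d matrix β has all eigenvalues with strictly negative real parts if and only if ‖e^{tβ}‖ → 0 as t → ∞, where ‖·‖ is the Frobenius (or any) matrix norm. -/
/-!
If every eigenvalue of the complexification `A` of `β` has negative real part, split `ℂᵈ` into
generalized eigenspaces of `A`. On the one for `μ`, `A - μ` is nilpotent, so
`e^{tA} v = e^{tμ} ∑_{m<k} tᵐ/m! (A - μ)ᵐ v` decays like a polynomial times `e^{t Re μ}`.
Conversely, `e^{tz}` lies in the spectrum of `e^{tA}` for every eigenvalue `z`, whence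
`e^{t Re z} ≤ ‖e^{tA}‖ ‖1‖`, which rules out decay when `Re z ≥ 0`. Complexification does not
change the Frobenius norm.
-/

open Filter NormedSpace

attribute [local instance] Matrix.frobeniusNormedAddCommGroup Matrix.frobeniusNormedRing
  Matrix.frobeniusNormedAlgebra

open Topology Finset Matrix

theorem Real.tendsto_pow_mul_exp_mul_atTop_nhds_zero (m : ℕ) {b : ℝ} (hb : b < 0) :
    Tendsto (fun t : ℝ => t ^ m * Real.exp (t * b)) atTop (𝓝 0) := by
  refine (tendsto_rpow_mul_exp_neg_mul_atTop_nhds_zero m (-b) (neg_pos.2 hb)).congr fun t => ?_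
  rw [Real.rpow_natCast, neg_neg, mul_comm b]

section BanachAlgebra

variable {𝔸 : Type*} [NormedRing 𝔸] [NormedAlgebra ℂ 𝔸] [CompleteSpace 𝔸]

theorem NormedSpace.exp_eq_exp_smul_exp_sub_algebraMap (a : 𝔸) (μ : ℂ) :
    exp a = Complex.exp μ • exp (a - algebraMap ℂ 𝔸 μ) := by
  let +nondep : NormedAlgebra ℚ 𝔸 := .restrictScalars ℚ ℂ 𝔸
  conv_lhs => rw [← add_sub_cancel (algebraMap ℂ 𝔸 μ) a]
  rw [exp_add_of_commute (Algebra.commutes μ _), ← algebraMap_exp_comm, Complex.exp_eq_exp_ℂ,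
    Algebra.smul_def]

theorem NormedSpace.exp_mul_re_le_norm_exp_smul_mul_norm_one {a : 𝔸} {z : ℂ}
    (hz : z ∈ spectrum ℂ a) {t : ℝ} (ht : t ≠ 0) :
    Real.exp (t * z.re) ≤ ‖exp ((t : ℂ) • a)‖ * ‖(1 : 𝔸)‖ := by
  have hmem : (t : ℂ) * z ∈ spectrum ℂ ((t : ℂ) • a) :=
    spectrum.smul_mem_smul_iff (r := Units.mk0 (t : ℂ) (by exact_mod_cast ht)) |>.2 hz
  simpa [Complex.norm_exp, ← Complex.exp_eq_exp_ℂ] using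
    spectrum.norm_le_norm_mul_of_mem (spectrum.exp_mem_exp _ hmem)

theorem NormedSpace.re_lt_zero_of_tendsto_norm_exp_smul
    {a : 𝔸} (h : Tendsto (fun t : ℝ => ‖exp ((t : ℂ) • a)‖) atTop (𝓝 0)) {z : ℂ}
    (hz : z ∈ spectrum ℂ a) : z.re < 0 := by
  by_contra! hre
  have hsmall : ∀ᶠ t : ℝ in atTop, ‖exp ((t : ℂ) • a)‖ * ‖(1 : 𝔸)‖ < 1 := by
    simpa using (h.mul_const ‖(1 : 𝔸)‖).eventually (eventually_lt_nhds (by simp))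
  obtain ⟨t, ht, htpos⟩ := (hsmall.and (eventually_gt_atTop 0)).exists
  have hone : 1 ≤ Real.exp (t * z.re) := Real.one_le_exp (by positivity)
  linarith [exp_mul_re_le_norm_exp_smul_mul_norm_one hz htpos.ne']

end BanachAlgebra

section Matrix

variable {n : Type*} [Fintype n] [DecidableEq n]

theorem Matrix.exp_mulVec_eq_sum_of_pow_mulVec_eq_zero {𝕂 : Type*} [RCLike 𝕂]
    {N : Matrix n n 𝕂} {v : n → 𝕂} {k : ℕ} (hv : N ^ k *ᵥ v = 0) :
    exp N *ᵥ v = ∑ m ∈ range k, (m.factorial⁻¹ : 𝕂) • (N ^ m *ᵥ v) := by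
  have hseries := (exp_series_hasSum_exp' (𝕂 := 𝕂) N).map (mulVec.addMonoidHomLeft v)
    (continuous_id.matrix_mulVec continuous_const)
  refine hseries.unique (hasSum_sum_of_ne_finset_zero (s := range k) fun m hm => ?_) |>.trans ?_
  · obtain ⟨j, rfl⟩ := Nat.exists_eq_add_of_le' (not_lt.1 (mem_range.not.1 hm))
    simp [mulVec.addMonoidHomLeft, smul_mulVec, pow_add, ← mulVec_mulVec, hv]
  · simp [mulVec.addMonoidHomLeft, smul_mulVec]

theorem Matrix.tendsto_exp_smul_mulVec_of_mem_maxGenEigenspace {A : Matrix n n ℂ} {μ : ℂ}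
    (hμ : μ.re < 0) {v : n → ℂ} (hv : v ∈ Module.End.maxGenEigenspace (toLin' A) μ) :
    Tendsto (fun t : ℝ => exp ((t : ℂ) • A) *ᵥ v) atTop (𝓝 0) := by
  set N := A - algebraMap ℂ (Matrix n n ℂ) μ
  obtain ⟨k, hk⟩ := (Module.End.mem_maxGenEigenspace _ _ _).1 hv
  have hNv : N ^ k *ᵥ v = 0 := show toLinAlgEquiv' (N ^ k) v = 0 by
    rwa [map_pow, map_sub, AlgEquiv.commutes, Algebra.algebraMap_eq_smul_one]
  have hexp (t : ℝ) : exp ((t : ℂ) • A) *ᵥ v =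
      Complex.exp (t * μ) • ∑ m ∈ range k, ((t : ℂ) ^ m * (m.factorial⁻¹ : ℂ)) • (N ^ m *ᵥ v) := by
    have htN : (t : ℂ) • A - algebraMap ℂ _ (t * μ) = (t : ℂ) • N := by
      rw [smul_sub, map_mul, Algebra.algebraMap_eq_smul_one (t : ℂ), smul_mul_assoc, one_mul]
    have hsplit : exp ((t : ℂ) • A) = Complex.exp (t * μ) • exp ((t : ℂ) • N) := by
      rw [← htN]
      exact exp_eq_exp_smul_exp_sub_algebraMap _ _
    have htNv : ((t : ℂ) • N) ^ k *ᵥ v = 0 := by rw [smul_pow, smul_mulVec, hNv, smul_zero]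
    rw [hsplit, smul_mulVec, exp_mulVec_eq_sum_of_pow_mulVec_eq_zero htNv]
    simp only [smul_pow, smul_mulVec, smul_smul, mul_comm]
  have hbound : ∀ᶠ t : ℝ in atTop, ‖exp ((t : ℂ) • A) *ᵥ v‖ ≤
      ∑ m ∈ range k, ((m.factorial : ℝ)⁻¹ * ‖N ^ m *ᵥ v‖) * (t ^ m * Real.exp (t * μ.re)) := by
    filter_upwards [eventually_ge_atTop 0] with t ht
    rw [hexp, norm_smul, Complex.norm_exp, Complex.re_ofReal_mul]
    refine (mul_le_mul_of_nonneg_left (norm_sum_le _ _) (Real.exp_pos _).le).trans_eq ?_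
    rw [mul_sum]
    refine sum_congr rfl fun m _ => ?_
    simp only [norm_smul, Complex.norm_mul, norm_pow, Complex.norm_real, Real.norm_eq_abs,
      abs_of_nonneg ht, norm_inv, RCLike.norm_natCast]
    ring
  have hlim : Tendsto (fun t : ℝ => ∑ m ∈ range k,
      ((m.factorial : ℝ)⁻¹ * ‖N ^ m *ᵥ v‖) * (t ^ m * Real.exp (t * μ.re))) atTop (𝓝 0) := by
    simpa using tendsto_finsetSum (range k) fun m _ =>
      (Real.tendsto_pow_mul_exp_mul_atTop_nhds_zero m hμ).const_mul _
  exact squeeze_zero_norm' hbound hlim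

theorem Matrix.tendsto_exp_smul_mulVec_of_forall_re_lt_zero {A : Matrix n n ℂ}
    (h : ∀ z ∈ spectrum ℂ A, z.re < 0) (v : n → ℂ) :
    Tendsto (fun t : ℝ => exp ((t : ℂ) • A) *ᵥ v) atTop (𝓝 0) := by
  have hv : v ∈ ⨆ μ, Module.End.maxGenEigenspace (toLin' A) μ := by
    rw [Module.End.iSup_maxGenEigenspace_eq_top]
    trivial
  refine Submodule.iSup_induction
    (motive := fun w => Tendsto (fun t : ℝ => exp ((t : ℂ) • A) *ᵥ w) atTop (𝓝 0))
    _ hv (fun μ w hw => ?_) (by simp) fun x y hx hy => by simpa [mulVec_add] using hx.add hy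
  obtain rfl | hw0 := eq_or_ne w 0
  · simp
  have hμ : Module.End.HasUnifEigenvalue (toLin' A) μ ⊤ := fun hbot =>
    hw0 (by simpa [hbot] using hw)
  have hμA : μ ∈ spectrum ℂ A := by
    simpa using
      ((Module.End.hasUnifEigenvalue_iff_hasUnifEigenvalue_one (by simp)).1 hμ).mem_spectrum
  exact tendsto_exp_smul_mulVec_of_mem_maxGenEigenspace (h μ hμA) hw

theorem Matrix.tendsto_exp_smul_of_forall_re_lt_zero {A : Matrix n n ℂ}
    (h : ∀ z ∈ spectrum ℂ A, z.re < 0) :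
    Tendsto (fun t : ℝ => exp ((t : ℂ) • A)) atTop (𝓝 0) := by
  refine tendsto_pi_nhds.2 fun i => tendsto_pi_nhds.2 fun j => ?_
  simpa [mulVec_single, Function.comp_def] using (continuous_apply i).tendsto _ |>.comp
    (tendsto_exp_smul_mulVec_of_forall_re_lt_zero h (Pi.single j 1))

theorem Matrix.norm_exp_map_algebraMap (B : Matrix n n ℝ) :
    ‖exp (B.map (algebraMap ℝ ℂ))‖ = ‖exp B‖ := by
  have hmap : (exp B).map (algebraMap ℝ ℂ) = exp (B.map (algebraMap ℝ ℂ)) :=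
    map_exp (algebraMap ℝ ℂ).mapMatrix (continuous_id.matrix_map Complex.continuous_ofReal) B
  rw [← hmap]
  exact frobenius_norm_map_eq _ _ Complex.norm_real

end Matrix

/-- A real matrix `β` has all eigenvalues with strictly negative real parts if and only if
`‖e^{tβ}‖ → 0` as `t → ∞` (Frobenius norm). -/
theorem stmt2 (d : ℕ) (β : Matrix (Fin d) (Fin d) ℝ) :
    (∀ z ∈ spectrum ℂ (β.map (algebraMap ℝ ℂ)), z.re < 0) ↔
      Tendsto (fun t : ℝ => ‖exp (t • β)‖) atTop (nhds 0) := by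
  have hnorm (t : ℝ) : ‖exp (t • β)‖ = ‖exp ((t : ℂ) • β.map (algebraMap ℝ ℂ))‖ := by
    rw [← norm_exp_map_algebraMap]
    congr 2
    ext
    simp
  simp_rw [hnorm]
  refine ⟨fun h => ?_, fun h z hz => re_lt_zero_of_tendsto_norm_exp_smul h hz⟩
  simpa using (tendsto_exp_smul_of_forall_re_lt_zero h).norm
end

section
/- Let c₁, c₂ > 0 and let ψ : [0,∞) → ℂ^d satisfy ‖ψ(s)‖ ≤ c₁ e^{−c₂ s} for all s ≥ 0 and Re⟨ξ, ψ(s)⟩ ≤ 0 for a fixed ξ ∈ ℝ^d with ‖ξ‖ > 1. Then ∫₀^∞ |e^{⟨ξ, ψ(s)⟩} − 1| ds ≤ c₁/c₂ + (2/c₂) log‖ξ‖. -/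
open MeasureTheory Set

noncomputable instance (d : ℕ) : MeasurableSpace (EuclideanSpace ℂ (Fin d)) :=
  MeasurableSpace.comap WithLp.ofLp MeasurableSpace.pi

/-!
On `[0, s₀]` the integrand is at most `2`, since `|e^z - 1| ≤ 2` when `Re z ≤ 0`; beyond `s₀` it is at
most `|⟨ξ, ψ(s)⟩| ≤ c₁ ‖ξ‖ e^{-c₂ s}`, by the mean value inequality for `exp` on the left half-plane
and Cauchy–Schwarz. Choosing `s₀ = log ‖ξ‖ / c₂`, where the two bounds balance up to constants, the
pieces contribute `2 s₀` and `c₁ ‖ξ‖ e^{-c₂ s₀} / c₂ = c₁ / c₂`.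
-/

namespace Complex

lemma norm_exp_sub_one_le_two_of_re_nonpos {z : ℂ} (hz : z.re ≤ 0) : ‖exp z - 1‖ ≤ 2 := by
  have h : ‖exp z‖ ≤ 1 := by rw [norm_exp]; exact Real.exp_le_one_iff.2 hz
  calc ‖exp z - 1‖ ≤ ‖exp z‖ + ‖(1 : ℂ)‖ := norm_sub_le _ _
    _ ≤ 2 := by rw [norm_one]; linarith

lemma norm_exp_sub_one_le_norm_of_re_nonpos {z : ℂ} (hz : z.re ≤ 0) : ‖exp z - 1‖ ≤ ‖z‖ := by
  have h := (convex_halfSpace_re_le (0 : ℝ)).norm_image_sub_le_of_norm_deriv_le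
    (fun w _ => differentiableAt_exp) (C := 1)
    (fun w (hw : w.re ≤ 0) => by rw [deriv_exp, norm_exp]; exact Real.exp_le_one_iff.2 hw)
    (show (0 : ℂ).re ≤ 0 by simp) hz
  simpa using h

end Complex

lemma EuclideanSpace.norm_sum_ofReal_mul_le {ι : Type*} [Fintype ι] (ξ : EuclideanSpace ℝ ι)
    (v : EuclideanSpace ℂ ι) : ‖∑ i, (ξ i : ℂ) * v i‖ ≤ ‖ξ‖ * ‖v‖ := by
  set ξℂ : EuclideanSpace ℂ ι := WithLp.toLp 2 fun i => (ξ i : ℂ)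
  have hinner : ∑ i, (ξ i : ℂ) * v i = inner ℂ ξℂ v := by
    simp [ξℂ, PiLp.inner_apply, mul_comm]
  have hnorm : ‖ξℂ‖ = ‖ξ‖ := by
    simp [ξℂ, EuclideanSpace.norm_eq]
  rw [hinner, ← hnorm]
  exact norm_inner_le_norm ξℂ v

lemma setIntegral_Ioi_zero_le_of_le_const_of_le_exp {F : ℝ → ℝ} {M A c s₀ : ℝ} (hc : 0 < c)
    (hs₀ : 0 ≤ s₀) (hFm : AEStronglyMeasurable F (volume.restrict (Ioi 0)))
    (hF0 : ∀ s, 0 < s → 0 ≤ F s) (hFM : ∀ s, 0 < s → F s ≤ M)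
    (hFA : ∀ s, 0 < s → F s ≤ A * Real.exp (-c * s)) :
    ∫ s in Ioi 0, F s ≤ M * s₀ + A * Real.exp (-c * s₀) / c := by
  have hexp (a : ℝ) : IntegrableOn (fun s => A * Real.exp (-c * s)) (Ioi a) :=
    (exp_neg_integrableOn_Ioi a hc).const_mul A
  have hFint : IntegrableOn F (Ioi 0) := by
    refine Integrable.mono' (hexp 0) hFm ?_
    filter_upwards [ae_restrict_mem measurableSet_Ioi] with s hs
    rw [Real.norm_of_nonneg (hF0 s hs)]
    exact hFA s hs
  rw [← Ioc_union_Ioi_eq_Ioi hs₀, setIntegral_union (Ioc_disjoint_Ioi le_rfl) measurableSet_Ioi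
    (hFint.mono_set Ioc_subset_Ioi_self) (hFint.mono_set (Ioi_subset_Ioi hs₀))]
  have hnear : ∫ s in Ioc 0 s₀, F s ≤ M * s₀ := by
    calc ∫ s in Ioc 0 s₀, F s ≤ ∫ _ in Ioc 0 s₀, M :=
          setIntegral_mono_on (hFint.mono_set Ioc_subset_Ioi_self)
            (integrableOn_const (by simp) (by simp)) measurableSet_Ioc fun s hs => hFM s hs.1
      _ = M * s₀ := by simp [hs₀, mul_comm]
  have hfar : ∫ s in Ioi s₀, F s ≤ A * Real.exp (-c * s₀) / c := by
    calc ∫ s in Ioi s₀, F s ≤ ∫ s in Ioi s₀, A * Real.exp (-c * s) :=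
          setIntegral_mono_on (hFint.mono_set (Ioi_subset_Ioi hs₀)) (hexp s₀) measurableSet_Ioi
            fun s hs => hFA s (hs₀.trans_lt hs)
      _ = A * Real.exp (-c * s₀) / c := by
          rw [integral_const_mul, integral_exp_mul_Ioi (by linarith)]
          field_simp
  linarith

theorem stmt5_general (d : ℕ) (c₁ c₂ : ℝ) (hc₂ : 0 < c₂)
    (ψ : ℝ → EuclideanSpace ℂ (Fin d)) (hψ : Measurable ψ)
    (ξ : EuclideanSpace ℝ (Fin d)) (hξ : 1 < ‖ξ‖)
    (hdecay : ∀ s : ℝ, 0 ≤ s → ‖ψ s‖ ≤ c₁ * Real.exp (-c₂ * s))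
    (hre : ∀ s : ℝ, 0 ≤ s → (∑ i, (ξ i : ℂ) * ψ s i).re ≤ 0) :
    (∫ s in Set.Ioi (0:ℝ),
        ‖Complex.exp (∑ i, (ξ i : ℂ) * ψ s i) - 1‖) ≤
      c₁ / c₂ + (2 / c₂) * Real.log ‖ξ‖ := by
  have hψi (i : Fin d) : Measurable fun s => ψ s i :=
    (measurable_pi_apply i).comp ((comap_measurable WithLp.ofLp).comp hψ)
  have hm : Measurable fun s => ‖Complex.exp (∑ i, (ξ i : ℂ) * ψ s i) - 1‖ :=
    ((Complex.measurable_exp.comp (Finset.measurable_sum _ fun i _ =>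
      measurable_const.mul (hψi i))).sub measurable_const).norm
  have hbound := setIntegral_Ioi_zero_le_of_le_const_of_le_exp (M := 2) (A := ‖ξ‖ * c₁)
    (s₀ := Real.log ‖ξ‖ / c₂) hc₂ (div_nonneg (Real.log_nonneg hξ.le) hc₂.le) hm.aestronglyMeasurable
    (fun s _ => norm_nonneg _)
    (fun s hs => Complex.norm_exp_sub_one_le_two_of_re_nonpos (hre s hs.le))
    (fun s hs => calc
      _ ≤ ‖∑ i, (ξ i : ℂ) * ψ s i‖ := Complex.norm_exp_sub_one_le_norm_of_re_nonpos (hre s hs.le)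
      _ ≤ ‖ξ‖ * (c₁ * Real.exp (-c₂ * s)) :=
        (EuclideanSpace.norm_sum_ofReal_mul_le ξ (ψ s)).trans (by gcongr; exact hdecay s hs.le)
      _ = _ := by ring)
  have hs₀ : Real.exp (-c₂ * (Real.log ‖ξ‖ / c₂)) = ‖ξ‖⁻¹ := by
    rw [show -c₂ * (Real.log ‖ξ‖ / c₂) = -Real.log ‖ξ‖ by field_simp, Real.exp_neg,
      Real.exp_log (by linarith)]
  rw [hs₀] at hbound
  convert hbound using 1
  field_simp
  ring

/-- If `‖ψ(s)‖ ≤ c₁ e^{-c₂ s}` and `Re⟨ξ, ψ(s)⟩ ≤ 0` with `‖ξ‖ > 1`, then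
`∫₀^∞ |e^{⟨ξ,ψ(s)⟩} - 1| ds ≤ c₁/c₂ + (2/c₂) log ‖ξ‖`. -/
theorem stmt5 (d : ℕ) (c₁ c₂ : ℝ) (hc₁ : 0 < c₁) (hc₂ : 0 < c₂)
    (ψ : ℝ → EuclideanSpace ℂ (Fin d)) (hψ : Measurable ψ)
    (ξ : EuclideanSpace ℝ (Fin d)) (hξ : 1 < ‖ξ‖)
    (hdecay : ∀ s : ℝ, 0 ≤ s → ‖ψ s‖ ≤ c₁ * Real.exp (-c₂ * s))
    (hre : ∀ s : ℝ, 0 ≤ s → (∑ i, (ξ i : ℂ) * ψ s i).re ≤ 0) :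
    (∫ s in Set.Ioi (0:ℝ),
        ‖Complex.exp (∑ i, (ξ i : ℂ) * ψ s i) - 1‖) ≤
      c₁ / c₂ + (2 / c₂) * Real.log ‖ξ‖ :=
  stmt5_general d c₁ c₂ hc₂ ψ hψ ξ hξ hdecay hre
end
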